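/- arXiv:2311.10270 — 3 statements merged into one kernel-verified Lean document; each statement's English description precedes it below -/
import Mathlib

section
/- Let A be an m×n real matrix and B an n×p real matrix with AB = 0. Then ℝⁿ decomposes as the orthogonal direct sum ℝⁿ = im(Aᵀ) ⊕ im(B) ⊕ (ker A ∩ ker Bᵀ) (Hodge decomposition). -/
/-!
Adjointness `⟨Mᵀu, z⟩ = ⟨u, Mz⟩` makes `im Mᵀ` orthogonal to `ker M`; together with `AB = 0`,
which puts `im B` inside `ker A`, this gives the three orthogonality relations. Conversely, a vector
orthogonal to `im Aᵀ + im B` is killed by `A` and by `Bᵀ` (test it against `AᵀAz` and `BBᵀz`), so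
splitting `x` into its orthogonal projection onto `im Aᵀ + im B` plus a remainder shows that the
three spaces span `ℝⁿ`.
-/

open Matrix LinearMap

namespace Matrix

variable {R l m n : Type*} [Fintype m]

theorem transpose_mulVec_dotProduct [Fintype l] [CommSemiring R] (M : Matrix l m R) (u : l → R)
    (z : m → R) :
    (Mᵀ *ᵥ u) ⬝ᵥ z = u ⬝ᵥ (M *ᵥ z) := by
  rw [mulVec_transpose, dotProduct_mulVec]

theorem dotProduct_eq_zero_of_mem_range_transpose_of_mem_ker [Fintype l] [CommSemiring R]
    {M : Matrix l m R} {x z : m → R} (hx : x ∈ range Mᵀ.mulVecLin) (hz : z ∈ ker M.mulVecLin) :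
    x ⬝ᵥ z = 0 := by
  obtain ⟨u, rfl⟩ := hx
  rw [mulVecLin_apply, transpose_mulVec_dotProduct, show M *ᵥ z = 0 from hz, dotProduct_zero]

theorem mem_ker_of_forall_mem_range_transpose_dotProduct_eq_zero [Fintype l]
    [CommRing R] [LinearOrder R] [IsStrictOrderedRing R] {M : Matrix l m R} {z : m → R}
    (hz : ∀ x ∈ range Mᵀ.mulVecLin, x ⬝ᵥ z = 0) : z ∈ ker M.mulVecLin := by
  have h := hz _ (mem_range_self Mᵀ.mulVecLin (M *ᵥ z))
  rw [mulVecLin_apply, transpose_mulVec_dotProduct] at h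
  exact dotProduct_self_eq_zero.1 h

theorem range_mulVecLin_le_ker_of_mul_eq_zero [Fintype n] [CommSemiring R] {A : Matrix l m R}
    {B : Matrix m n R} (hAB : A * B = 0) : range B.mulVecLin ≤ ker A.mulVecLin := by
  rw [range_le_ker_iff, ← mulVecLin_mul, hAB, mulVecLin_zero]

end Matrix

theorem Submodule.exists_mem_forall_dotProduct_sub_eq_zero {ι : Type*} [Fintype ι]
    (W : Submodule ℝ (ι → ℝ)) (x : ι → ℝ) : ∃ w ∈ W, ∀ v ∈ W, v ⬝ᵥ (x - w) = 0 := by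
  let K := W.comap (WithLp.linearEquiv 2 ℝ (ι → ℝ)).toLinearMap
  refine ⟨(K.starProjection (WithLp.toLp 2 x)).ofLp, K.starProjection_apply_mem _,
    fun v hv => ?_⟩
  have h := K.inner_right_of_mem_orthogonal (u := WithLp.toLp 2 v) hv
    (K.sub_starProjection_mem_orthogonal (WithLp.toLp 2 x))
  rwa [EuclideanSpace.inner_eq_star_dotProduct, star_trivial, dotProduct_comm] at h

/-- Hodge decomposition: if AB = 0 then ℝⁿ is the orthogonal direct sum of
im Aᵀ, im B, and ker A ∩ ker Bᵀ. -/
theorem stmt_7 (m n p : ℕ) (A : Matrix (Fin m) (Fin n) ℝ) (B : Matrix (Fin n) (Fin p) ℝ)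
    (hAB : A * B = 0) :
    (LinearMap.range (Aᵀ.mulVecLin) ⊔ LinearMap.range (B.mulVecLin) ⊔
        (LinearMap.ker (A.mulVecLin) ⊓ LinearMap.ker (Bᵀ.mulVecLin)) = ⊤) ∧
      (∀ x ∈ LinearMap.range (Aᵀ.mulVecLin), ∀ y ∈ LinearMap.range (B.mulVecLin),
        x ⬝ᵥ y = 0) ∧
      (∀ x ∈ LinearMap.range (Aᵀ.mulVecLin),
        ∀ z ∈ LinearMap.ker (A.mulVecLin) ⊓ LinearMap.ker (Bᵀ.mulVecLin), x ⬝ᵥ z = 0) ∧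
      (∀ y ∈ LinearMap.range (B.mulVecLin),
        ∀ z ∈ LinearMap.ker (A.mulVecLin) ⊓ LinearMap.ker (Bᵀ.mulVecLin), y ⬝ᵥ z = 0) := by
  have hB : range B.mulVecLin = range Bᵀᵀ.mulVecLin := by rw [transpose_transpose]
  refine ⟨eq_top_iff.2 fun x _ => ?_,
    fun x hx y hy => dotProduct_eq_zero_of_mem_range_transpose_of_mem_ker hx
      (range_mulVecLin_le_ker_of_mul_eq_zero hAB hy),
    fun x hx z hz => dotProduct_eq_zero_of_mem_range_transpose_of_mem_ker hx hz.1,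
    fun y hy z hz => dotProduct_eq_zero_of_mem_range_transpose_of_mem_ker (hB ▸ hy) hz.2⟩
  obtain ⟨w, hw, hperp⟩ :=
    (range Aᵀ.mulVecLin ⊔ range B.mulVecLin).exists_mem_forall_dotProduct_sub_eq_zero x
  have hkerA : x - w ∈ ker A.mulVecLin :=
    mem_ker_of_forall_mem_range_transpose_dotProduct_eq_zero fun v hv =>
      hperp v (Submodule.mem_sup_left hv)
  have hkerBt : x - w ∈ ker Bᵀ.mulVecLin :=
    mem_ker_of_forall_mem_range_transpose_dotProduct_eq_zero fun v hv =>
      hperp v (Submodule.mem_sup_right (hB ▸ hv))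
  simpa using Submodule.add_mem _ (Submodule.mem_sup_left hw)
    (Submodule.mem_sup_right (Submodule.mem_inf.2 ⟨hkerA, hkerBt⟩))
end

section
/- Fix α ∈ (0,1] and a constant C ≥ 0. Let f ∈ ℝⁿ and let ψ ∈ ℝⁿ be a unit vector (‖ψ‖₂ = 1) supported on a set R ⊆ {1,…,n} with Σ_{i∈R} ψᵢ = 0. Suppose |fᵢ − fⱼ| ≤ C·|R|^α for all i, j ∈ R. Then |⟨f, ψ⟩| ≤ C·|R|^{α + 1/2}. -/
open Finset

/-- Decay of dictionary coefficients: a unit-norm, zero-mean vector supported on a region R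
paired against a Hölder-type signal yields a coefficient bounded by C |R|^(α + 1/2). -/
theorem stmt_9 (n : ℕ) (α C : ℝ) (hα : 0 < α ∧ α ≤ 1) (hC : 0 ≤ C)
    (f ψ : Fin n → ℝ) (R : Finset (Fin n))
    (hsupp : ∀ i ∉ R, ψ i = 0)
    (hnorm : ∑ i, ψ i ^ 2 = 1)
    (hmean : ∑ i ∈ R, ψ i = 0)
    (hHolder : ∀ i ∈ R, ∀ j ∈ R, |f i - f j| ≤ C * (R.card : ℝ) ^ α) :
    |∑ i, f i * ψ i| ≤ C * (R.card : ℝ) ^ (α + 1 / 2) := by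
  have hRne : R.Nonempty := by
    rcases R.eq_empty_or_nonempty with h | h
    · exfalso
      have : ∑ i, ψ i ^ 2 = 0 := Finset.sum_eq_zero fun i _ => by
        rw [hsupp i (by simp [h])]; ring
      linarith
    · exact h
  obtain ⟨j0, hj0⟩ := hRne
  have hcard : (0 : ℝ) < R.card := by exact_mod_cast Finset.card_pos.mpr ⟨j0, hj0⟩
  have h1 : ∑ i, f i * ψ i = ∑ i ∈ R, f i * ψ i :=
    (Finset.sum_subset R.subset_univ (fun i _ hi => by rw [hsupp i hi]; ring)).symm
  have h2 : ∑ i ∈ R, f i * ψ i = ∑ i ∈ R, (f i - f j0) * ψ i := by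
    simp [sub_mul, Finset.sum_sub_distrib, ← Finset.mul_sum, hmean]
  -- bound on sum of |ψ i|
  have hnormR : ∑ i ∈ R, ψ i ^ 2 = 1 := by
    rw [← hnorm]
    exact Finset.sum_subset R.subset_univ (fun i _ hi => by rw [hsupp i hi]; ring)
  have hsumabs : ∑ i ∈ R, |ψ i| ≤ Real.sqrt R.card := by
    have hsq : (∑ i ∈ R, |ψ i|) ^ 2 ≤ (R.card : ℝ) * ∑ i ∈ R, |ψ i| ^ 2 :=
      sq_sum_le_card_mul_sum_sq
    have : (∑ i ∈ R, |ψ i|) ^ 2 ≤ (R.card : ℝ) := by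
      calc (∑ i ∈ R, |ψ i|) ^ 2 ≤ (R.card : ℝ) * ∑ i ∈ R, |ψ i| ^ 2 := hsq
        _ = (R.card : ℝ) * ∑ i ∈ R, ψ i ^ 2 := by simp [sq_abs]
        _ = (R.card : ℝ) := by rw [hnormR]; ring
    have hnn : (0:ℝ) ≤ ∑ i ∈ R, |ψ i| := Finset.sum_nonneg fun i _ => abs_nonneg _
    nlinarith [Real.sq_sqrt (le_of_lt hcard), Real.sqrt_nonneg (R.card : ℝ)]
  have hbound : |∑ i ∈ R, (f i - f j0) * ψ i| ≤
      C * (R.card : ℝ) ^ α * ∑ i ∈ R, |ψ i| := by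
    calc |∑ i ∈ R, (f i - f j0) * ψ i| ≤ ∑ i ∈ R, |(f i - f j0) * ψ i| :=
          Finset.abs_sum_le_sum_abs _ _
      _ = ∑ i ∈ R, |f i - f j0| * |ψ i| := by simp [abs_mul]
      _ ≤ ∑ i ∈ R, C * (R.card : ℝ) ^ α * |ψ i| := by
          apply Finset.sum_le_sum
          intro i hi
          exact mul_le_mul_of_nonneg_right (hHolder i hi j0 hj0) (abs_nonneg _)
      _ = C * (R.card : ℝ) ^ α * ∑ i ∈ R, |ψ i| := by rw [Finset.mul_sum]
  have hCα : 0 ≤ C * (R.card : ℝ) ^ α := mul_nonneg hC (Real.rpow_nonneg hcard.le _)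
  calc |∑ i, f i * ψ i| = |∑ i ∈ R, (f i - f j0) * ψ i| := by rw [h1, h2]
    _ ≤ C * (R.card : ℝ) ^ α * ∑ i ∈ R, |ψ i| := hbound
    _ ≤ C * (R.card : ℝ) ^ α * Real.sqrt R.card :=
        mul_le_mul_of_nonneg_left hsumabs hCα
    _ = C * (R.card : ℝ) ^ (α + 1 / 2) := by
        rw [Real.sqrt_eq_rpow, Real.rpow_add hcard]
        ring
end

section
/- Let {φ₀, …, φ_{n−1}} be an orthonormal basis of ℝⁿ, f ∈ ℝⁿ, and 0 < ρ < 2. Let P_m f be a best m-term approximation of f, i.e., the sum of the m terms ⟨f, φ_l⟩ φ_l with the m largest values of |⟨f, φ_l⟩| (for 1 ≤ m ≤ n). Then ‖f − P_m f‖₂ ≤ |f|_ρ / m^β, where β = 1/ρ − 1/2 and |f|_ρ = (Σ_{l=0}^{n−1} |⟨f, φ_l⟩|^ρ)^{1/ρ}. -/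
/-!
Write `c l = ⟨f, φ l⟩` and `S = ∑ l, |c l| ^ ρ`. Rows orthonormal force columns orthonormal, so
`f = ∑ l, c l • φ l`, hence `f - P_m f = ∑ l ∉ T, c l • φ l` and by Parseval its squared norm is
the tail `∑ l ∉ T, c l ^ 2`. A tail coefficient is dominated by all `m` coefficients in `T`, so
`m |c l| ^ ρ ≤ S`, and since `ρ ≤ 2`,
`c l ^ 2 = |c l| ^ (2 - ρ) |c l| ^ ρ ≤ (S / m) ^ ((2 - ρ) / ρ) |c l| ^ ρ`.
Summing over the tail gives `(S / m) ^ ((2 - ρ) / ρ) S = (S ^ (1 / ρ) / m ^ (1 / ρ - 1 / 2)) ^ 2`.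
-/

open Finset

section Orthonormal

variable {ι κ : Type*} [Fintype ι]

theorem sum_sq_sum_smul_of_orthonormal [DecidableEq κ] {φ : κ → ι → ℝ}
    (hortho : ∀ l l', ∑ i, φ l i * φ l' i = if l = l' then 1 else 0)
    (s : Finset κ) (a : κ → ℝ) :
    ∑ i, (∑ l ∈ s, a l • φ l) i ^ 2 = ∑ l ∈ s, a l ^ 2 := by
  calc ∑ i, (∑ l ∈ s, a l • φ l) i ^ 2
      = ∑ i, ∑ l ∈ s, ∑ l' ∈ s, a l * a l' * (φ l i * φ l' i) := by
        simp only [Finset.sum_apply, Pi.smul_apply, smul_eq_mul, sq, sum_mul_sum]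
        exact sum_congr rfl fun i _ => sum_congr rfl fun l _ => sum_congr rfl fun l' _ => by ring
    _ = ∑ l ∈ s, ∑ l' ∈ s, a l * a l' * ∑ i, φ l i * φ l' i := by
        simp only [mul_sum]
        rw [sum_comm]
        exact sum_congr rfl fun l _ => sum_comm
    _ = ∑ l ∈ s, a l ^ 2 := by
        refine sum_congr rfl fun l hl => ?_
        simp [hortho, hl, sq]

variable [DecidableEq ι] {φ : ι → ι → ℝ}

theorem sum_mul_eq_ite_of_orthonormal
    (hortho : ∀ l l', ∑ i, φ l i * φ l' i = if l = l' then 1 else 0) (i j : ι) :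
    ∑ l, φ l i * φ l j = if i = j then 1 else 0 := by
  have hrows : Matrix.of φ * (Matrix.of φ).transpose = 1 := by
    ext l l'
    simpa [Matrix.mul_apply, Matrix.one_apply] using hortho l l'
  simpa [Matrix.mul_apply, Matrix.one_apply] using
    congr_arg (fun M => M i j) (mul_eq_one_comm.mp hrows)

theorem eq_sum_smul_of_orthonormal
    (hortho : ∀ l l', ∑ i, φ l i * φ l' i = if l = l' then 1 else 0) (f : ι → ℝ) :
    f = ∑ l, (∑ i, f i * φ l i) • φ l := by
  funext j
  simp only [Finset.sum_apply, Pi.smul_apply, smul_eq_mul, sum_mul]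
  rw [sum_comm]
  simp [mul_assoc, ← mul_sum, sum_mul_eq_ite_of_orthonormal hortho]

end Orthonormal

section Tail

theorem sq_le_rpow_mul_abs_rpow {a A ρ : ℝ} (hρ0 : 0 < ρ) (hρ2 : ρ ≤ 2) (ha : |a| ^ ρ ≤ A) :
    a ^ 2 ≤ A ^ ((2 - ρ) / ρ) * |a| ^ ρ := by
  have hA : 0 ≤ A := (Real.rpow_nonneg (abs_nonneg a) ρ).trans ha
  have hroot : |a| ≤ A ^ (1 / ρ) := by
    calc |a| = (|a| ^ ρ) ^ (1 / ρ) := by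
          rw [← Real.rpow_mul (abs_nonneg a), mul_one_div_cancel hρ0.ne', Real.rpow_one]
      _ ≤ A ^ (1 / ρ) := by gcongr
  calc a ^ 2 = |a| ^ (2 - ρ) * |a| ^ ρ := by
        rw [← Real.rpow_add_of_nonneg (abs_nonneg a) (by linarith) hρ0.le, sub_add_cancel,
          Real.rpow_two, sq_abs]
    _ ≤ (A ^ (1 / ρ)) ^ (2 - ρ) * |a| ^ ρ := by
        gcongr
    _ = A ^ ((2 - ρ) / ρ) * |a| ^ ρ := by
        rw [← Real.rpow_mul hA, one_div_mul_eq_div]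

theorem rpow_div_mul_self_eq_sq {S m ρ : ℝ} (hS : 0 ≤ S) (hm : 0 ≤ m) (hρ : 0 < ρ) :
    (S / m) ^ ((2 - ρ) / ρ) * S = (S ^ (1 / ρ) / m ^ (1 / ρ - 1 / 2)) ^ 2 := by
  have hexp : (2 - ρ) / ρ = (1 / ρ - 1 / 2) * 2 := by field_simp
  rw [div_pow, ← Real.rpow_two, ← Real.rpow_two, ← Real.rpow_mul hS, ← Real.rpow_mul hm,
    ← hexp, Real.div_rpow hS hm, div_mul_eq_mul_div]
  congr 1
  rw [← Real.rpow_add_one' hS (by rw [div_add_one hρ.ne', sub_add_cancel]; positivity)]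
  congr 1
  field_simp
  ring

variable {ι : Type*} [Fintype ι] [DecidableEq ι]

theorem sum_compl_sq_le_of_forall_abs_le {c : ι → ℝ} {ρ : ℝ} (hρ0 : 0 < ρ) (hρ2 : ρ ≤ 2)
    {T : Finset ι} (hT : T.Nonempty) (hTbig : ∀ l ∈ T, ∀ l' ∉ T, |c l'| ≤ |c l|) :
    ∑ l ∈ Tᶜ, c l ^ 2 ≤ ((∑ l, |c l| ^ ρ) ^ (1 / ρ) / (#T : ℝ) ^ (1 / ρ - 1 / 2)) ^ 2 := by
  set S := ∑ l, |c l| ^ ρ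
  have hcard : (0 : ℝ) < #T := by exact_mod_cast hT.card_pos
  have hsummand : ∀ l, 0 ≤ |c l| ^ ρ := fun l => Real.rpow_nonneg (abs_nonneg _) ρ
  have htail : ∀ l ∈ Tᶜ, |c l| ^ ρ ≤ S / #T := by
    intro l hl
    rw [le_div_iff₀' hcard]
    calc (#T : ℝ) * |c l| ^ ρ ≤ ∑ l' ∈ T, |c l'| ^ ρ := by
          simpa using card_nsmul_le_sum T (fun l' => |c l'| ^ ρ) _ fun l' hl' =>
            Real.rpow_le_rpow (abs_nonneg _) (hTbig l' hl' l (mem_compl.mp hl)) hρ0.le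
      _ ≤ S := sum_le_univ_sum_of_nonneg hsummand
  calc ∑ l ∈ Tᶜ, c l ^ 2 ≤ ∑ l ∈ Tᶜ, (S / #T) ^ ((2 - ρ) / ρ) * |c l| ^ ρ :=
        sum_le_sum fun l hl => sq_le_rpow_mul_abs_rpow hρ0 hρ2 (htail l hl)
    _ ≤ (S / #T) ^ ((2 - ρ) / ρ) * S := by
        rw [← mul_sum]
        gcongr
        exact sum_le_univ_sum_of_nonneg hsummand
    _ = (S ^ (1 / ρ) / (#T : ℝ) ^ (1 / ρ - 1 / 2)) ^ 2 :=
        rpow_div_mul_self_eq_sq (sum_nonneg fun l _ => hsummand l) hcard.le hρ0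

end Tail

/-- Approximation power of an orthonormal basis: the best nonlinear m-term approximation
error is bounded by |f|_ρ / m^(1/ρ - 1/2). -/
theorem stmt_10 (n : ℕ) (φ : Fin n → (Fin n → ℝ))
    (hortho : ∀ l l', (∑ i, φ l i * φ l' i) = if l = l' then (1 : ℝ) else 0)
    (f : Fin n → ℝ) (ρ : ℝ) (hρ : 0 < ρ ∧ ρ < 2)
    (m : ℕ) (hm : 1 ≤ m ∧ m ≤ n)
    (T : Finset (Fin n)) (hT : T.card = m)
    (hTbig : ∀ l ∈ T, ∀ l' ∉ T, |∑ i, f i * φ l' i| ≤ |∑ i, f i * φ l i|)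
    (Pmf : Fin n → ℝ) (hP : Pmf = ∑ l ∈ T, (∑ i, f i * φ l i) • φ l) :
    Real.sqrt (∑ i, (f i - Pmf i) ^ 2) ≤
      (∑ l, |∑ i, f i * φ l i| ^ ρ) ^ (1 / ρ) / (m : ℝ) ^ (1 / ρ - 1 / 2) := by
  set c : Fin n → ℝ := fun l => ∑ i, f i * φ l i
  have hresidual : f - Pmf = ∑ l ∈ Tᶜ, c l • φ l := by
    nth_rewrite 1 [eq_sum_smul_of_orthonormal hortho f]
    rw [hP, ← sum_compl_add_sum T, add_sub_cancel_right]
  have hparseval : ∑ i, (f i - Pmf i) ^ 2 = ∑ l ∈ Tᶜ, c l ^ 2 := by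
    rw [← sum_sq_sum_smul_of_orthonormal hortho Tᶜ c, ← hresidual]
    rfl
  have hTne : T.Nonempty := card_pos.mp (hT ▸ hm.1)
  rw [Real.sqrt_le_left (by positivity), hparseval, ← hT]
  exact sum_compl_sq_le_of_forall_abs_le hρ.1 hρ.2.le hTne hTbig
end
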